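/- Let n_a, n_b, n_c ≥ 0 and equip the vertex set of the opposite quiver Q(n_a, n_b, n_c)^{op} with any linear order ≤. Then for every vertex i there is at most one right-minimal directed path in Q(n_a, n_b, n_c)^{op} with source i; in particular, Condition (2) holds for (Q(n_a, n_b, n_c)^{op}, ≤). -/

import Mathlib

/-- The vertex set of the quiver `Q(n_a, n_b, n_c)`: vertices `a 0, …, a n_a`,
`b 0, …, b (n_b - 1)` (representing `b_1, …, b_{n_b}`) and
`c 0, …, c (n_c - 1)` (representing `c_1, …, c_{n_c}`). -/
inductive QV (na nb nc : ℕ) : Type where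
  | a : Fin (na + 1) → QV na nb nc
  | b : Fin nb → QV na nb nc
  | c : Fin nc → QV na nb nc

/-- The arrow relation of `Q(n_a, n_b, n_c)`: arrows `a_i → a_{i-1}`, `a_0 → b_1`,
`b_i → b_{i+1}`, `a_0 → c_1`, `c_i → c_{i+1}`. -/
def qrel {na nb nc : ℕ} : QV na nb nc → QV na nb nc → Prop
  | .a i, .a j => (i : ℕ) = (j : ℕ) + 1
  | .a i, .b j => (i : ℕ) = 0 ∧ (j : ℕ) = 0
  | .a i, .c j => (i : ℕ) = 0 ∧ (j : ℕ) = 0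
  | .b i, .b j => (j : ℕ) = (i : ℕ) + 1
  | .c i, .c j => (j : ℕ) = (i : ℕ) + 1
  | _, _ => False

/-- The opposite quiver `Q(n_a, n_b, n_c)ᵒᵖ`, obtained by reversing all arrows of
`Q(n_a, n_b, n_c)`. -/
instance {na nb nc : ℕ} : Quiver (QV na nb nc) :=
  ⟨fun u v => PLift (qrel v u)⟩

open Quiver

/-- The path `p` passes through the vertex `k`. -/
def PassesThrough {V : Type*} [Quiver V] {a b : V} (p : Path a b) (k : V) : Prop :=
  ∃ (v : Path a k) (u : Path k b), v.comp u = p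

/-- `k` is an inner vertex of `p`. -/
def IsInnerVertex {V : Type*} [Quiver V] {a b : V} (p : Path a b) (k : V) : Prop :=
  ∃ (v : Path a k) (u : Path k b), v.length ≠ 0 ∧ u.length ≠ 0 ∧ v.comp u = p

/-- A nontrivial path `p : i → j` is right-minimal directed if `i < j` and every inner
vertex `k` of `p` satisfies `k ≤ i`. -/
def IsRMD {V : Type*} [Quiver V] [LinearOrder V] {i j : V} (p : Path i j) : Prop :=
  p.length ≠ 0 ∧ i < j ∧ ∀ k, IsInnerVertex p k → k ≤ i

/-- Condition (1): for all paths `p : i → k` and `q : j → k` with `i < k < j` such that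
every vertex passed through by `p` is `≤ k`, there is a path `r : j → i` with `q = p ∘ r`. -/
def Cond1 (V : Type*) [Quiver V] [LinearOrder V] : Prop :=
  ∀ (i k j : V) (p : Path i k) (q : Path j k),
    i < k → k < j → (∀ m, PassesThrough p m → m ≤ k) →
    ∃ r : Path j i, r.comp p = q

/-- Condition (2): for every path `q : j → i` with `i < j`, there is at most one
right-minimal directed path `p` with source `i` and target `< j`. -/
def Cond2 (V : Type*) [Quiver V] [LinearOrder V] : Prop :=
  ∀ i j : V, i < j → Nonempty (Path j i) →
    ∀ (k k' : V) (p : Path i k) (p' : Path i k'),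
      IsRMD p → IsRMD p' → k < j → k' < j → k = k' ∧ HEq p p' 

/-
Every vertex of `Q(n_a, n_b, n_c)ᵒᵖ` has at most one outgoing arrow, so a path is determined by
its source and its length. Of two right-minimal directed paths `p, p'` from `i`, a strictly
shorter `p` would be a proper prefix of `p'`, making its target an inner vertex of `p'` and hence
`≤ i`, against `i < t(p)`. So both have the same length and coincide.
-/

namespace Quiver.Path

variable {V : Type*} [Quiver V] [∀ u : V, Subsingleton (Σ v, u ⟶ v)]

theorem sigma_eq_of_length_eq {i k k' : V} (p : Path i k) (p' : Path i k')
    (h : p.length = p'.length) : (⟨k, p⟩ : Σ k, Path i k) = ⟨k', p'⟩ := by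
  induction p generalizing k' with
  | nil =>
    cases p' with
    | nil => rfl
    | cons => simp at h
  | cons q e ih =>
    cases p' with
    | nil => simp at h
    | cons q' e' =>
      obtain ⟨rfl, hq⟩ := Sigma.mk.inj_iff.mp (ih q' (by simpa using h))
      cases eq_of_heq hq
      obtain ⟨rfl, he⟩ := Sigma.mk.inj_iff.mp (Subsingleton.elim (⟨_, e⟩ : Σ v, _ ⟶ v) ⟨_, e'⟩)
      cases eq_of_heq he
      rfl

theorem isInnerVertex_of_length_lt {i k k' : V} (p : Path i k) (p' : Path i k')
    (hp : p.length ≠ 0) (h : p.length < p'.length) : IsInnerVertex p' k := by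
  obtain ⟨v, p₁, p₂, rfl, hl⟩ := p'.exists_eq_comp_of_le_length h.le
  obtain ⟨rfl, hp₁⟩ := Sigma.mk.inj_iff.mp (sigma_eq_of_length_eq p₁ p hl)
  cases eq_of_heq hp₁
  rw [length_comp] at h
  exact ⟨p₁, p₂, hp, by omega, rfl⟩

end Quiver.Path

section RightMinimalDirected

variable {V : Type*} [Quiver V] [∀ u : V, Subsingleton (Σ v, u ⟶ v)] [LinearOrder V]

theorem IsRMD.length_le {i k k' : V} {p : Path i k} {p' : Path i k'}
    (hp : IsRMD p) (hp' : IsRMD p') : p.length ≤ p'.length :=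
  not_lt.mp fun h => (hp'.2.1.trans_le (hp.2.2 k' (p'.isInnerVertex_of_length_lt p hp'.1 h))).false

theorem IsRMD.sigma_eq {i k k' : V} {p : Path i k} {p' : Path i k'}
    (hp : IsRMD p) (hp' : IsRMD p') : (⟨k, p⟩ : Σ k, Path i k) = ⟨k', p'⟩ :=
  Path.sigma_eq_of_length_eq p p' ((hp.length_le hp').antisymm (hp'.length_le hp))

end RightMinimalDirected

instance QV.subsingleton_sigma_hom {na nb nc : ℕ} (u : QV na nb nc) :
    Subsingleton (Σ v, u ⟶ v) := by
  refine ⟨fun ⟨v, ⟨e⟩⟩ ⟨w, ⟨f⟩⟩ => ?_⟩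
  suffices v = w by subst this; rfl
  cases u <;> cases v <;> cases w <;> simp only [qrel] at e f <;>
    first
      | exact congrArg _ (Fin.ext (by omega))
      | omega

/-- In `Q(n_a, n_b, n_c)ᵒᵖ`, for any linear order on the vertices, every vertex is the
source of at most one right-minimal directed path; in particular Condition (2) holds. -/
theorem stmt_13 (na nb nc : ℕ) [LinearOrder (QV na nb nc)] :
    (∀ (i : QV na nb nc) (k k' : QV na nb nc)
        (p : Path i k) (p' : Path i k'),
        IsRMD p → IsRMD p' → k = k' ∧ HEq p p') ∧
      Cond2 (QV na nb nc) := by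
  have unique : ∀ (i k k' : QV na nb nc) (p : Path i k) (p' : Path i k'),
      IsRMD p → IsRMD p' → k = k' ∧ HEq p p' :=
    fun _ _ _ _ _ hp hp' => Sigma.ext_iff.mp (hp.sigma_eq hp')
  exact ⟨unique, fun i _ _ _ k k' p p' hp hp' _ _ => unique i k k' p p' hp hp'⟩
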